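/- Let f be a partial Boolean function and ε ∈ [0, 1/2). Then R₀(f_sab) ≥ R̄_ε(f_sab) ≥ (1 − 2ε) · R₀(f_sab). That is, the ε-error expected query complexity of the sabotage problem of f is within a factor 1 − 2ε of its zero-error expected query complexity. -/

import Mathlib

/-! ### Decision trees -/

/-- A deterministic decision tree querying positions of type `ι`, receiving answers
in `α`, and producing an output in `β`. -/
inductive DTree (ι α β : Type) : Type
  | leaf (b : β) : DTree ι α β
  | node (i : ι) (next : α → DTree ι α β) : DTree ι α β

namespace DTree

variable {ι α β : Type}

/-- The output of a decision tree on input `x`. -/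
def output : DTree ι α β → (ι → α) → β
  | leaf b, _ => b
  | node i next, x => (next (x i)).output x

/-- The number of queries made by a decision tree on input `x`. -/
def cost : DTree ι α β → (ι → α) → ℕ
  | leaf _, _ => 0
  | node i next, x => (next (x i)).cost x + 1

/-- The set of positions queried by a decision tree on input `x`. -/
def queries : DTree ι α β → (ι → α) → Set ι
  | leaf _, _ => ∅
  | node i next, x => insert i ((next (x i)).queries x)

end DTree

/-- A partial function on inputs `ι → α` with outputs in `β`; `none` means undefined
(the domain is the set of inputs mapped to `some` value). -/
abbrev PFn (ι α β : Type) := (ι → α) → Option β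

/-- `t` computes the partial function `f` (correct on every input of the domain). -/
def DTree.computesP {ι α β : Type} (t : DTree ι α β) (f : PFn ι α β) : Prop :=
  ∀ x b, f x = some b → t.output x = b

/-- Deterministic query complexity `D(f)`. -/
noncomputable def Dq {ι α β : Type} (f : PFn ι α β) : ℝ :=
  sInf {T : ℝ | 0 ≤ T ∧ ∃ t : DTree ι α β, t.computesP f ∧ ∀ x, (t.cost x : ℝ) ≤ T}

/-! ### Randomized query algorithms -/

/-- A randomized query algorithm: a finitely supported probability distribution over
deterministic decision trees. -/
structure RandAlg (ι α β : Type) where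
  Ω : Type
  [fin : Fintype Ω]
  p : Ω → ℝ
  nonneg : ∀ ω, 0 ≤ p ω
  sum_one : ∑ ω, p ω = 1
  tree : Ω → DTree ι α β

namespace RandAlg

variable {ι α β : Type}

/-- Expected number of queries of `A` on input `x`. -/
noncomputable def expCost (A : RandAlg ι α β) (x : ι → α) : ℝ :=
  letI := A.fin
  ∑ ω, A.p ω * ((A.tree ω).cost x : ℝ)

open Classical in
/-- Probability that `A` outputs `b` on input `x`. -/
noncomputable def succProb (A : RandAlg ι α β) (x : ι → α) (b : β) : ℝ :=
  letI := A.fin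
  ∑ ω, if (A.tree ω).output x = b then A.p ω else 0

/-- `A` computes `f` with error at most `ε`: on every input of the domain the correct
output is produced with probability at least `1 - ε`. -/
def Computes (A : RandAlg ι α β) (f : PFn ι α β) (ε : ℝ) : Prop :=
  ∀ x b, f x = some b → 1 - ε ≤ A.succProb x b

/-- The worst-case cost of `A` (over all inputs and all trees in the support) is at most `T`. -/
def WCostLe (A : RandAlg ι α β) (T : ℝ) : Prop :=
  ∀ ω, A.p ω ≠ 0 → ∀ x, ((A.tree ω).cost x : ℝ) ≤ T

/-- The expected cost of `A` on every input of the domain of `f` is at most `T`. -/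
def ECostLe (A : RandAlg ι α β) (f : PFn ι α β) (T : ℝ) : Prop :=
  ∀ x, (f x).isSome → A.expCost x ≤ T

end RandAlg

/-- `R_ε(f)`: minimum worst-case cost of an `ε`-error randomized algorithm for `f`. -/
noncomputable def Rw {ι α β : Type} (ε : ℝ) (f : PFn ι α β) : ℝ :=
  sInf {T : ℝ | 0 ≤ T ∧ ∃ A : RandAlg ι α β, A.Computes f ε ∧ A.WCostLe T}

/-- `R̄_ε(f)`: minimum expected cost of an `ε`-error randomized algorithm for `f`. -/
noncomputable def Rbar {ι α β : Type} (ε : ℝ) (f : PFn ι α β) : ℝ :=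
  sInf {T : ℝ | 0 ≤ T ∧ ∃ A : RandAlg ι α β, A.Computes f ε ∧ A.ECostLe f T}

/-- `R₀(f)`: zero-error expected randomized query complexity. -/
noncomputable def R0 {ι α β : Type} (f : PFn ι α β) : ℝ := Rbar 0 f

/-- `R(f) := R_{1/3}(f)`: bounded-error randomized query complexity. -/
noncomputable def Rb {ι α β : Type} (f : PFn ι α β) : ℝ := Rw (1/3) f

/-- The total function `f` viewed as a partial function. -/
def tot {ι α β : Type} (f : (ι → α) → β) : PFn ι α β := fun x => some (f x)


/-! ### Sabotage complexity and composition -/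

/-- The four-letter alphabet `{0, 1, *, †}` of sabotaged inputs. -/
inductive Sab : Type
  | zero : Sab
  | one : Sab
  | star : Sab
  | dagger : Sab
deriving DecidableEq

/-- Embedding of Boolean values into the sabotage alphabet. -/
def Sab.ofBool : Bool → Sab
  | false => Sab.zero
  | true => Sab.one

/-- `p` is consistent with the Boolean input `x`: wherever `p` has a Boolean entry,
it agrees with `x`. -/
def SabConsistent {ι : Type} (p : ι → Sab) (x : ι → Bool) : Prop :=
  ∀ i, p i = Sab.ofBool (x i) ∨ p i = Sab.star ∨ p i = Sab.dagger

/-- `p` is a sabotaged input for `f` using the sabotage symbol `s`: all entries of `p`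
lie in `{0, 1, s}` and `p` is consistent with both a `0`-input and a `1`-input of `f`. -/
def IsSabotaged {ι : Type} (f : PFn ι Bool Bool) (s : Sab) (p : ι → Sab) : Prop :=
  (∀ i, p i = Sab.zero ∨ p i = Sab.one ∨ p i = s) ∧
  ∃ x y, (f x).isSome ∧ (f y).isSome ∧ f x ≠ f y ∧ SabConsistent p x ∧ SabConsistent p y

open Classical in
/-- The sabotage problem `f_sab` associated with `f`: it is `0` on `P_f` (inputs
sabotaged with `*`) and `1` on `P_f†` (inputs sabotaged with `†`). -/
noncomputable def fsab {ι : Type} (f : PFn ι Bool Bool) : PFn ι Sab Bool :=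
  fun p =>
    if IsSabotaged f Sab.star p then some false
    else if IsSabotaged f Sab.dagger p then some true
    else none

open Classical in
/-- `f_usab`: the restriction of `f_sab` to inputs having exactly one `*` or `†` entry. -/
noncomputable def fusab {ι : Type} (f : PFn ι Bool Bool) : PFn ι Sab Bool :=
  fun p =>
    if ∃! i, p i = Sab.star ∨ p i = Sab.dagger then fsab f p else none

/-- Randomized sabotage complexity `RS(f) := R₀(f_sab)`. -/
noncomputable def RS {ι : Type} (f : PFn ι Bool Bool) : ℝ := R0 (fsab f)

/-- `RS_u(f) := R₀(f_usab)` (this is `0` automatically when `f_usab` has empty domain). -/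
noncomputable def RSu {ι : Type} (f : PFn ι Bool Bool) : ℝ := R0 (fusab f)

open Classical in
/-- Composition `f ∘ g` of partial functions: defined on an input exactly when every
inner copy of `g` is defined and the tuple of inner values lies in the domain of `f`. -/
noncomputable def pcomp {κ ι α β γ : Type} (f : PFn κ β γ) (g : PFn ι α β) :
    PFn (κ × ι) α γ :=
  fun x =>
    if h : ∀ i : κ, (g fun j => x (i, j)).isSome then
      f fun i => (g fun j => x (i, j)).get (h i)
    else none

/-- Index types for iterated self-composition. -/
def IterIdx (κ : Type) : ℕ → Type
  | 0 => κ
  | n + 1 => κ × IterIdx κ n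

/-- `iterComp f n` is `f` composed with itself `n + 1` times
(`iterComp f 0 = f`, `iterComp f (n+1) = f ∘ iterComp f n`). -/
noncomputable def iterComp {κ : Type} (f : PFn κ Bool Bool) : (n : ℕ) → PFn (IterIdx κ n) Bool Bool
  | 0 => f
  | n + 1 => pcomp f (iterComp f n)

/-! ### The index function -/

/-- The value of a bit-string read as a binary number (bit `i` has weight `2^i`). -/
def binval {b : ℕ} (x : Fin b → Bool) : ℕ := ∑ i, if x i then 2 ^ (i : ℕ) else 0

theorem sum_range_two_pow (b : ℕ) : ∑ i ∈ Finset.range b, 2 ^ i = 2 ^ b - 1 := by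
  induction b with
  | zero => simp
  | succ n ih =>
    rw [Finset.sum_range_succ, ih, pow_succ]
    have : 1 ≤ 2 ^ n := Nat.one_le_two_pow
    omega

theorem binval_lt {b : ℕ} (x : Fin b → Bool) : binval x < 2 ^ b := by
  have h1 : binval x ≤ ∑ i : Fin b, 2 ^ (i : ℕ) := by
    refine Finset.sum_le_sum fun i _ => ?_
    split <;> simp
  have h2 : ∑ i : Fin b, 2 ^ (i : ℕ) = 2 ^ b - 1 := by
    rw [Fin.sum_univ_eq_sum_range (fun i => 2 ^ i) b]
    exact sum_range_two_pow b
  have h3 : 0 < 2 ^ b := Nat.pow_pos (by norm_num)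
  omega

/-- The largest `c` with `c + 2^c ≤ m`. -/
def indexC (m : ℕ) : ℕ := Nat.findGreatest (fun c => c + 2 ^ c ≤ m) m

/-- The index function `Ind_m : {0,1}^m → {0,1}`: the first `c` bits (where `c` is the
largest integer with `c + 2^c ≤ m`) are read as a binary address `y` into the next
`2^c` bits, and the output is the addressed bit. -/
def IndFn (m : ℕ) : PFn (Fin m) Bool Bool :=
  fun x =>
    let c := indexC m
    let y := ∑ i : Fin m, if (i : ℕ) < c ∧ x i = true then 2 ^ (i : ℕ) else 0
    if h : c + y < m then some (x ⟨c + y, h⟩) else none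

/-- `f^{⊕c}_ind`: the index function on `c + 2^c` bits with `f` composed into each of
the `c` address bits only. -/
def findex {n : ℕ} (f : PFn (Fin n) Bool Bool) (c : ℕ) :
    PFn ((Fin c × Fin n) ⊕ Fin (2 ^ c)) Bool Bool :=
  fun x =>
    if h : ∀ i : Fin c, (f fun j => x (Sum.inl (i, j))).isSome then
      some (x (Sum.inr ⟨binval fun i => (f fun j => x (Sum.inl (i, j))).get (h i),
        binval_lt _⟩))
    else none


/- An `ε`-error algorithm `A` for `f_sab` must, on every input `p` of the domain, read a `*` or
`†` entry with probability at least `1 - 2ε`: the input `p'` obtained by swapping `*` and `†`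
has the opposite value, and every run that reads no such entry answers alike on `p` and `p'`.
A sabotage entry reveals the answer, so running `A` until it reads one, restarting otherwise,
is a zero-error algorithm of expected cost at most `T / (1 - 2ε)` when `A` has expected cost
`T`. Randomized algorithms are finitely supported here, so the restarts are cut off after `k`
rounds by a scan of all positions, which adds at most `(2ε)^k n` to the cost; letting `k → ∞`
gives the bound. -/

namespace DTree

variable {ι α β : Type}

theorem output_congr {x y : ι → α} :
    ∀ t : DTree ι α β, (∀ i ∈ t.queries x, x i = y i) → t.output x = t.output y
  | leaf _, _ => rfl
  | node i next, h => by
    have hi : x i = y i := h i (Set.mem_insert i _)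
    simp only [output, ← hi]
    exact output_congr (next (x i)) fun j hj => h j (Set.mem_insert_of_mem i hj)

end DTree

namespace RandAlg

variable {ι α β : Type}

attribute [local instance] RandAlg.fin

theorem expCost_nonneg (A : RandAlg ι α β) (x : ι → α) : 0 ≤ A.expCost x :=
  Finset.sum_nonneg fun ω _ => mul_nonneg (A.nonneg ω) (Nat.cast_nonneg _)

theorem succProb_eq_one {A : RandAlg ι α β} {x : ι → α} {b : β}
    (h : ∀ ω, (A.tree ω).output x = b) : A.succProb x b = 1 := by
  simp only [succProb, h, if_true, A.sum_one]

theorem computes_zero {A : RandAlg ι α β} {f : PFn ι α β}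
    (h : ∀ x b, f x = some b → ∀ ω, (A.tree ω).output x = b) : A.Computes f 0 :=
  fun x b hx => by rw [succProb_eq_one (h x b hx), sub_zero]

theorem Computes.mono {A : RandAlg ι α β} {f : PFn ι α β} {ε ε' : ℝ} (h : A.Computes f ε)
    (hε : ε ≤ ε') : A.Computes f ε' :=
  fun x b hx => (sub_le_sub_left hε 1).trans (h x b hx)

def pure (t : DTree ι α β) : RandAlg ι α β where
  Ω := Unit
  p _ := 1
  nonneg _ := zero_le_one
  sum_one := by simp
  tree _ := t

theorem expCost_pure (t : DTree ι α β) (x : ι → α) : (pure t).expCost x = t.cost x := by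
  simp only [expCost, pure, one_mul]
  exact Fintype.sum_unique _

end RandAlg

section Complexity

variable {ι α β : Type} {f : PFn ι α β} {ε T : ℝ} {A : RandAlg ι α β}

theorem Rbar_le (hT : 0 ≤ T) (hA : A.Computes f ε) (hc : A.ECostLe f T) : Rbar ε f ≤ T :=
  csInf_le ⟨0, fun _ h => h.1⟩ ⟨hT, A, hA, hc⟩

theorem le_Rbar {c : ℝ} (hT : 0 ≤ T) (hA : A.Computes f ε) (hc : A.ECostLe f T)
    (h : ∀ T', 0 ≤ T' → ∀ A' : RandAlg ι α β, A'.Computes f ε → A'.ECostLe f T' → c ≤ T') :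
    c ≤ Rbar ε f :=
  le_csInf ⟨T, hT, A, hA, hc⟩ fun T' ⟨hT', A', hA', hc'⟩ => h T' hT' A' hA' hc'

theorem Rbar_anti {ε' : ℝ} (hε : ε ≤ ε') (hT : 0 ≤ T) (hA : A.Computes f ε)
    (hc : A.ECostLe f T) : Rbar ε' f ≤ Rbar ε f :=
  csInf_le_csInf ⟨0, fun _ h => h.1⟩ ⟨T, hT, A, hA, hc⟩
    fun _ ⟨hT', A', hA', hc'⟩ => ⟨hT', A', hA'.mono hε, hc'⟩

end Complexity

namespace Sab

/-- The answer of `f_sab` that a sabotage entry reveals. -/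
def verdict : Sab → Option Bool
  | star => some false
  | dagger => some true
  | _ => none

def mark : Bool → Sab
  | false => star
  | true => dagger

def swap : Sab → Sab
  | star => dagger
  | dagger => star
  | a => a

@[simp] theorem verdict_mark (b : Bool) : (mark b).verdict = some b := by
  cases b <;> rfl

@[simp] theorem swap_mark (b : Bool) : (mark b).swap = mark !b := by
  cases b <;> rfl

theorem ofBool_injective : Function.Injective ofBool := by
  decide

theorem swap_of_verdict_eq_none {a : Sab} (h : a.verdict = none) : a.swap = a := by
  cases a <;> simp_all [verdict, swap]

end Sab

section Sabotage

variable {ι : Type} {f : PFn ι Bool Bool}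

def Unanimous (p : ι → Sab) (b : Bool) : Prop :=
  ∀ i c, (p i).verdict = some c → c = b

theorem SabConsistent.swap {p : ι → Sab} {x : ι → Bool} (h : SabConsistent p x) :
    SabConsistent (Sab.swap ∘ p) x := fun i => by
  rcases h i with h' | h' | h' <;> simp only [Function.comp, h']
  · cases x i <;> simp [Sab.ofBool, Sab.swap]
  all_goals simp [Sab.swap]

theorem IsSabotaged.swap {s : Sab} {p : ι → Sab} (h : IsSabotaged f s p) :
    IsSabotaged f s.swap (Sab.swap ∘ p) := by
  obtain ⟨hp, x, y, hx, hy, hxy, hpx, hpy⟩ := h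
  refine ⟨fun i => ?_, x, y, hx, hy, hxy, hpx.swap, hpy.swap⟩
  rcases hp i with h' | h' | h' <;> simp [h', Sab.swap]

theorem SabConsistent.eq_ofBool {p : ι → Sab} {x : ι → Bool} (h : SabConsistent p x) {i : ι}
    (hi : (p i).verdict = none) : p i = Sab.ofBool (x i) := by
  rcases h i with h' | h' | h' <;> simp_all [Sab.verdict]

theorem IsSabotaged.exists_verdict_isSome {s : Sab} {p : ι → Sab} (h : IsSabotaged f s p) :
    ∃ i, ((p i).verdict).isSome := by
  by_contra! hnone
  obtain ⟨-, x, y, -, -, hxy, hpx, hpy⟩ := h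
  refine hxy (congrArg f (funext fun i => Sab.ofBool_injective ?_))
  have hi : (p i).verdict = none := by simpa using hnone i
  rw [← hpx.eq_ofBool hi, ← hpy.eq_ofBool hi]

theorem IsSabotaged.eq_of_verdict_eq_some {s : Sab} {p : ι → Sab} (h : IsSabotaged f s p)
    {i : ι} {c : Bool} (hi : (p i).verdict = some c) : p i = s := by
  rcases h.1 i with h' | h' | h' <;> simp_all [Sab.verdict]

theorem IsSabotaged.unanimous {b : Bool} {p : ι → Sab} (h : IsSabotaged f (Sab.mark b) p) :
    Unanimous p b := fun i c hi => by
  simpa [h.eq_of_verdict_eq_some hi] using hi.symm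

theorem fsab_eq_some_of_isSabotaged {b : Bool} {p : ι → Sab}
    (h : IsSabotaged f (Sab.mark b) p) : fsab f p = some b := by
  cases b
  · exact if_pos h
  · have hstar : ¬ IsSabotaged f Sab.star p := fun hs => by
      obtain ⟨i, hi⟩ := h.exists_verdict_isSome
      obtain ⟨c, hc⟩ := Option.isSome_iff_exists.mp hi
      exact absurd ((hs.eq_of_verdict_eq_some hc).symm.trans (h.eq_of_verdict_eq_some hc))
        (by decide)
    simp only [fsab, if_neg hstar]
    exact if_pos h

theorem isSabotaged_of_fsab_eq_some {b : Bool} {p : ι → Sab} (h : fsab f p = some b) :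
    IsSabotaged f (Sab.mark b) p := by
  unfold fsab at h
  split_ifs at h with hs hd <;> cases h
  · exact hs
  · exact hd

theorem fsab_swap {b : Bool} {p : ι → Sab} (h : fsab f p = some b) :
    fsab f (Sab.swap ∘ p) = some !b :=
  fsab_eq_some_of_isSabotaged (by simpa using (isSabotaged_of_fsab_eq_some h).swap)

end Sabotage

namespace DTree

variable {ι : Type}

/-- Run `t`, answering as soon as a sabotage entry is read; if `t` reaches a leaf, run `k`. -/
def trunc : DTree ι Sab Bool → DTree ι Sab Bool → DTree ι Sab Bool
  | leaf _, k => k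
  | node i next, k => node i fun a => a.verdict.elim (trunc (next a) k) leaf

def sweep : List ι → DTree ι Sab Bool
  | [] => leaf false
  | i :: l => trunc (node i fun _ => leaf false) (sweep l)

def Hits (t : DTree ι Sab Bool) (p : ι → Sab) : Prop :=
  ∃ i ∈ t.queries p, ((p i).verdict).isSome

theorem not_hits_leaf (b : Bool) (p : ι → Sab) : ¬ (leaf b).Hits p := by
  simp [Hits, queries]

theorem hits_node {i : ι} {next : Sab → DTree ι Sab Bool} {p : ι → Sab} :
    (node i next).Hits p ↔ ((p i).verdict).isSome ∨ (next (p i)).Hits p := by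
  simp [Hits, queries]

theorem trunc_output {p : ι → Sab} {b : Bool} (hp : Unanimous p b) {k : DTree ι Sab Bool} :
    ∀ t : DTree ι Sab Bool, t.Hits p ∨ k.output p = b → (t.trunc k).output p = b
  | leaf _, h => h.resolve_left (not_hits_leaf _ p)
  | node i next, h => by
    simp only [trunc, output]
    cases hi : (p i).verdict with
    | some c => exact hp i c hi
    | none =>
      refine trunc_output hp (next (p i)) (h.imp_left fun hit => ?_)
      simpa [hi] using hits_node.mp hit

open Classical in
theorem trunc_cost_le (p : ι → Sab) (k : DTree ι Sab Bool) :
    ∀ t : DTree ι Sab Bool,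
      (t.trunc k).cost p ≤ t.cost p + if t.Hits p then 0 else k.cost p
  | leaf _ => by simp [trunc, cost, not_hits_leaf]
  | node i next => by
    simp only [trunc, cost]
    cases hi : (p i).verdict with
    | some c => simp only [Option.elim, cost]; omega
    | none =>
      have hhits : (node i next).Hits p ↔ (next (p i)).Hits p := by simp [hits_node, hi]
      have := trunc_cost_le p k (next (p i))
      simp only [Option.elim, hhits]
      omega

theorem sweep_output {p : ι → Sab} {b : Bool} (hp : Unanimous p b) :
    ∀ l : List ι, (∃ i ∈ l, ((p i).verdict).isSome) → (sweep l).output p = b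
  | [], h => by simp at h
  | i :: l, h => by
    refine trunc_output hp _ ?_
    by_cases hi : ((p i).verdict).isSome
    · exact Or.inl (hits_node.mpr (Or.inl hi))
    · obtain ⟨j, hj, hjs⟩ := h
      have hjl : j ∈ l := (List.mem_cons.mp hj).resolve_left (by rintro rfl; exact hi hjs)
      exact Or.inr (sweep_output hp l ⟨j, hjl, hjs⟩)

theorem sweep_cost_le (p : ι → Sab) : ∀ l : List ι, (sweep l).cost p ≤ l.length
  | [] => by simp [sweep, cost]
  | i :: l => by
    have htrunc := trunc_cost_le p (sweep l) (node i fun _ => leaf false)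
    have hl := sweep_cost_le p l
    simp only [cost, List.length_cons] at htrunc ⊢
    split_ifs at htrunc <;> simp only [sweep] <;> omega

variable [Fintype ι]

noncomputable def sweepAll : DTree ι Sab Bool := sweep Finset.univ.toList

theorem sweepAll_computesP (f : PFn ι Bool Bool) : sweepAll.computesP (fsab f) :=
  fun p b h => by
    have hsab := isSabotaged_of_fsab_eq_some h
    obtain ⟨i, hi⟩ := hsab.exists_verdict_isSome
    exact sweep_output hsab.unanimous _ ⟨i, Finset.mem_toList.mpr (Finset.mem_univ i), hi⟩

theorem sweepAll_cost_le (p : ι → Sab) : (sweepAll.cost p : ℝ) ≤ Fintype.card ι := by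
  rw [← Finset.card_univ, ← Finset.length_toList]
  exact_mod_cast sweep_cost_le p _

end DTree

namespace RandAlg

variable {ι : Type}

attribute [local instance] RandAlg.fin

def trunc (A B : RandAlg ι Sab Bool) : RandAlg ι Sab Bool where
  Ω := A.Ω × B.Ω
  p ω := A.p ω.1 * B.p ω.2
  nonneg ω := mul_nonneg (A.nonneg ω.1) (B.nonneg ω.2)
  sum_one := by rw [Fintype.sum_prod_type, ← Finset.sum_mul_sum, A.sum_one, B.sum_one, one_mul]
  tree ω := (A.tree ω.1).trunc (B.tree ω.2)

def retry (A : RandAlg ι Sab Bool) (t : DTree ι Sab Bool) : ℕ → RandAlg ι Sab Bool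
  | 0 => pure t
  | k + 1 => A.trunc (A.retry t k)

open Classical in
noncomputable def missProb (A : RandAlg ι Sab Bool) (p : ι → Sab) : ℝ :=
  ∑ ω, if (A.tree ω).Hits p then 0 else A.p ω

theorem expCost_trunc_le (A B : RandAlg ι Sab Bool) (p : ι → Sab) :
    (A.trunc B).expCost p ≤ A.expCost p + A.missProb p * B.expCost p := by
  classical
  calc (A.trunc B).expCost p
      ≤ ∑ ω : A.Ω × B.Ω, A.p ω.1 * B.p ω.2 * ((A.tree ω.1).cost p
          + if (A.tree ω.1).Hits p then 0 else ((B.tree ω.2).cost p : ℝ)) := by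
        refine Finset.sum_le_sum fun ω _ => mul_le_mul_of_nonneg_left ?_
          (mul_nonneg (A.nonneg ω.1) (B.nonneg ω.2))
        exact_mod_cast DTree.trunc_cost_le p (B.tree ω.2) (A.tree ω.1)
    _ = ∑ a, ∑ b, (B.p b * (A.p a * (A.tree a).cost p)
          + (if (A.tree a).Hits p then 0 else A.p a) * (B.p b * (B.tree b).cost p)) := by
        rw [Fintype.sum_prod_type]
        refine Finset.sum_congr rfl fun a _ => Finset.sum_congr rfl fun b _ => ?_
        split_ifs <;> ring
    _ = A.expCost p + A.missProb p * B.expCost p := by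
        simp only [Finset.sum_add_distrib, ← Finset.sum_mul, ← Finset.mul_sum, B.sum_one, one_mul]
        rfl

theorem missProb_le {A : RandAlg ι Sab Bool} {p p' : ι → Sab} {b : Bool} {ε : ℝ}
    (hagree : ∀ ω, ¬ (A.tree ω).Hits p → (A.tree ω).output p = (A.tree ω).output p')
    (hp : 1 - ε ≤ A.succProb p b) (hp' : 1 - ε ≤ A.succProb p' !b) :
    A.missProb p ≤ 2 * ε := by
  have hsum : A.missProb p + A.succProb p b + A.succProb p' (!b) ≤ 2 := by
    calc A.missProb p + A.succProb p b + A.succProb p' (!b) ≤ ∑ ω, 2 * A.p ω := by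
          simp only [missProb, succProb, ← Finset.sum_add_distrib]
          refine Finset.sum_le_sum fun ω _ => ?_
          have hω := A.nonneg ω
          by_cases hit : (A.tree ω).Hits p
          · split_ifs <;> linarith
          · have hout := hagree ω hit
            split_ifs with h₁ h₂ <;> first | linarith | simp_all
      _ = 2 := by rw [← Finset.mul_sum, A.sum_one, mul_one]
  linarith

theorem missProb_le_of_computes {f : PFn ι Bool Bool} {A : RandAlg ι Sab Bool} {ε : ℝ}
    (hA : A.Computes (fsab f) ε) {p : ι → Sab} {b : Bool} (hp : fsab f p = some b) :
    A.missProb p ≤ 2 * ε := by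
  refine missProb_le (fun ω hit => DTree.output_congr _ fun i hi => ?_) (hA p b hp)
    (hA _ _ (fsab_swap hp))
  have hnone : (p i).verdict = none :=
    Option.not_isSome_iff_eq_none.mp fun hs => hit ⟨i, hi, hs⟩
  exact (Sab.swap_of_verdict_eq_none hnone).symm

theorem retry_output (A : RandAlg ι Sab Bool) {t : DTree ι Sab Bool} {p : ι → Sab} {b : Bool}
    (hp : Unanimous p b) (ht : t.output p = b) :
    ∀ k ω, ((A.retry t k).tree ω).output p = b
  | 0, _ => ht
  | k + 1, _ => DTree.trunc_output hp _ (Or.inr (retry_output A hp ht k _))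

theorem retry_computes {f : PFn ι Bool Bool} (A : RandAlg ι Sab Bool) {t : DTree ι Sab Bool}
    (ht : t.computesP (fsab f)) (k : ℕ) : (A.retry t k).Computes (fsab f) 0 :=
  computes_zero fun p b hp =>
    A.retry_output (isSabotaged_of_fsab_eq_some hp).unanimous (ht p b hp) k

theorem expCost_retry_le {A : RandAlg ι Sab Bool} {p : ι → Sab} {T δ : ℝ}
    (hT : A.expCost p ≤ T) (hδ : A.missProb p ≤ δ) (hδ0 : 0 ≤ δ) (hδ1 : δ < 1)
    (t : DTree ι Sab Bool) :
    ∀ k, (A.retry t k).expCost p ≤ T / (1 - δ) + δ ^ k * t.cost p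
  | 0 => by
    have : 0 ≤ T / (1 - δ) := div_nonneg ((A.expCost_nonneg p).trans hT) (by linarith)
    simp only [retry, expCost_pure, pow_zero, one_mul]
    linarith
  | k + 1 => by
    have hδ1' : 1 - δ ≠ 0 := by linarith
    calc (A.retry t (k + 1)).expCost p
        ≤ A.expCost p + A.missProb p * (A.retry t k).expCost p := expCost_trunc_le _ _ p
      _ ≤ T + δ * (T / (1 - δ) + δ ^ k * t.cost p) :=
          add_le_add hT (mul_le_mul hδ (expCost_retry_le hT hδ hδ0 hδ1 t k)
            (expCost_nonneg _ p) hδ0)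
      _ = T / (1 - δ) + δ ^ (k + 1) * t.cost p := by field_simp; ring

end RandAlg

section SabotageComplexity

variable {ι : Type} [Fintype ι] (f : PFn ι Bool Bool)

theorem exists_zero_error_fsab :
    ∃ A : RandAlg ι Sab Bool, A.Computes (fsab f) 0 ∧ A.ECostLe (fsab f) (Fintype.card ι) :=
  ⟨RandAlg.pure DTree.sweepAll,
    RandAlg.computes_zero fun p b hp _ => DTree.sweepAll_computesP f p b hp,
    fun p _ => (RandAlg.expCost_pure _ p).trans_le (DTree.sweepAll_cost_le p)⟩

theorem R0_fsab_le {ε T : ℝ} (hε0 : 0 ≤ ε) (hε : ε < 1 / 2) (hT : 0 ≤ T)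
    {A : RandAlg ι Sab Bool} (hA : A.Computes (fsab f) ε) (hc : A.ECostLe (fsab f) T) :
    R0 (fsab f) ≤ T / (1 - 2 * ε) := by
  have hbound : ∀ k : ℕ, R0 (fsab f) ≤ T / (1 - 2 * ε) + (2 * ε) ^ k * Fintype.card ι := by
    intro k
    have : 0 ≤ T / (1 - 2 * ε) := div_nonneg hT (by linarith)
    refine Rbar_le (by positivity) (A.retry_computes (DTree.sweepAll_computesP f) k)
      fun p hp => ?_
    obtain ⟨b, hb⟩ := Option.isSome_iff_exists.mp hp
    calc (A.retry DTree.sweepAll k).expCost p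
        ≤ T / (1 - 2 * ε) + (2 * ε) ^ k * DTree.sweepAll.cost p :=
          RandAlg.expCost_retry_le (hc p hp) (RandAlg.missProb_le_of_computes hA hb)
            (by linarith) (by linarith) _ k
      _ ≤ T / (1 - 2 * ε) + (2 * ε) ^ k * Fintype.card ι := by
          gcongr
          exact_mod_cast DTree.sweepAll_cost_le p
  have hlim : Filter.Tendsto (fun k : ℕ => T / (1 - 2 * ε) + (2 * ε) ^ k * Fintype.card ι)
      Filter.atTop (nhds (T / (1 - 2 * ε))) := by
    simpa using tendsto_const_nhds.add
      ((tendsto_pow_atTop_nhds_zero_of_lt_one (by linarith) (by linarith)).mul_const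
        (Fintype.card ι : ℝ))
  exact ge_of_tendsto' hlim hbound

end SabotageComplexity

/-- **Bounded-error and zero-error complexity of the sabotage problem agree.**
For every partial Boolean function `f` and `ε ∈ [0, 1/2)`:
`R₀(f_sab) ≥ R̄_ε(f_sab) ≥ (1 − 2ε) · R₀(f_sab)`. -/
theorem sabotage_bounded_vs_zero_error {n : ℕ} (f : PFn (Fin n) Bool Bool)
    (ε : ℝ) (hε0 : 0 ≤ ε) (hε : ε < 1/2) :
    Rbar ε (fsab f) ≤ R0 (fsab f) ∧ (1 - 2*ε) * R0 (fsab f) ≤ Rbar ε (fsab f) := by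
  obtain ⟨A₀, hA₀, hc₀⟩ := exists_zero_error_fsab f
  refine ⟨Rbar_anti hε0 (Nat.cast_nonneg _) hA₀ hc₀,
    le_Rbar (Nat.cast_nonneg _) (hA₀.mono hε0) hc₀ fun T hT A hA hc => ?_⟩
  rw [mul_comm, ← le_div_iff₀ (by linarith)]
  exact R0_fsab_le f hε0 hε hT hA hc
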